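/- For a fixed shape ρ ⊂ (ℤ₊)^d of a d-dimensional partition, the multivariable generating function identity holds: Σ_{π : shape(π) ⊆ ρ} ∏_{(i₁,...,i_{d+1}) ∈ Cor(π)} x^{(1)}_{i₁}···x^{(d)}_{i_d} = ∏_{(i₁,...,i_d) ∈ ρ} (1 − x^{(1)}_{i₁}···x^{(d)}_{i_d})^{−1}, as an identity of formal power series. -/

import Mathlib

open scoped BigOperators

noncomputable section

namespace HDP

variable {d : ℕ}

/-- The step `i → i + e_ℓ` in `ℤ₊^d` (coordinates are 0-based). -/
def step (i : Fin d → ℕ) (ℓ : Fin d) : Fin d → ℕ := Function.update i ℓ (i ℓ + 1)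

/-- `p` is a directed lattice path of length `n` starting at `i`:
each step goes from a point to the point plus a standard basis vector. -/
def IsPathFrom (i : Fin d → ℕ) (n : ℕ) (p : ℕ → Fin d → ℕ) : Prop :=
  p 0 = i ∧ ∀ t < n, ∃ ℓ, p (t + 1) = step (p t) ℓ

/-- The last passage time `G(i)`: the maximum, over directed lattice paths starting
at `i`, of the sum of the entries of `A` along the path. -/
def lpt (A : (Fin d → ℕ) → ℕ) (i : Fin d → ℕ) : ℕ :=
  sSup {s | ∃ n p, IsPathFrom i n p ∧ s = ∑ t ∈ Finset.range (n + 1), A (p t)}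

/-- A `d`-dimensional partition: a finitely supported function `ℤ₊^d → ℕ`
which is weakly decreasing in each coordinate. -/
def IsPartition (π : (Fin d → ℕ) → ℕ) : Prop :=
  (Function.support π).Finite ∧ ∀ i j : Fin d → ℕ, (∀ k, i k ≤ j k) → π j ≤ π i

/-- The set of corners of a `d`-dimensional partition `π` : points `(i, k)` of the
diagram of `π` (i.e. `1 ≤ k ≤ π i`) such that `(i + e ℓ, k)` is not in the diagram
for every `ℓ ∈ [d]`. -/
def Cor (π : (Fin d → ℕ) → ℕ) : Set ((Fin d → ℕ) × ℕ) :=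
  {p | 1 ≤ p.2 ∧ p.2 ≤ π p.1 ∧ ∀ ℓ, π (step p.1 ℓ) < p.2}

/-- The number of corners of `π`. -/
def cor (π : (Fin d → ℕ) → ℕ) : ℕ := Nat.card (Cor π)

/-- The corner-hook volume of `π`: the sum over corners `(i, k)` of
`i₁ + ⋯ + i_d - d + 1` (in 1-based coordinates; with our 0-based
coordinates this cohook length is `(∑ j, i j) + 1`). -/
def chvol (π : (Fin d → ℕ) → ℕ) : ℕ := ∑ᶠ p ∈ Cor π, ((∑ j, p.1 j) + 1)

/-- A set is down-closed for the componentwise order. -/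
def DownClosed (ρ : Set (Fin d → ℕ)) : Prop :=
  ∀ i j : Fin d → ℕ, (∀ k, i k ≤ j k) → j ∈ ρ → i ∈ ρ

/-- The set of top corners of a shape `ρ`. -/
def Cr (ρ : Set (Fin d → ℕ)) : Set (Fin d → ℕ) := {i ∈ ρ | ∀ ℓ, step i ℓ ∉ ρ}

end HDP

open HDP

/-- The product topology on formal power series (coefficientwise convergence). -/
instance mvPowerSeriesTopology (σ : Type*) : TopologicalSpace (MvPowerSeries σ ℚ) :=
  inferInstanceAs (TopologicalSpace ((σ →₀ ℕ) → ℚ))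

/-!
Write `x_i = x^{(1)}_{i_1} ⋯ x^{(d)}_{i_d}`. The corners of `π` above a cell `i` are the heights
`k` with `max_ℓ π (i + e_ℓ) < k ≤ π i`, so the weight of `π` is `∏_i x_i ^ c(i)` with
`c(i) = π i - max_ℓ π (i + e_ℓ)`. The map `π ↦ c` is a bijection from the partitions supported in
`ρ` onto all functions `ρ → ℕ`: its inverse is the last passage time `G`, which is characterised by
`G(i) = c(i) + max_ℓ G(i + e_ℓ)`. The sum therefore factors into the geometric series
`∑_n x_i ^ n = (1 - x_i)⁻¹`, `i ∈ ρ`.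
-/

/- `mvPowerSeriesTopology` is definitionally Mathlib's scoped `MvPowerSeries.WithPiTopology`
topology, so results stated for the latter apply to it. -/

instance mvPowerSeriesTopology.t2Space (σ : Type*) : T2Space (MvPowerSeries σ ℚ) :=
  MvPowerSeries.WithPiTopology.instT2Space

instance mvPowerSeriesTopology.isTopologicalRing (σ : Type*) :
    IsTopologicalRing (MvPowerSeries σ ℚ) :=
  MvPowerSeries.WithPiTopology.instIsTopologicalRing σ ℚ

namespace MvPowerSeries

open scoped WithPiTopology

variable {σ ι k : Type*}

section Summable

variable {R : Type*} [CommSemiring R] [TopologicalSpace R]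

theorem summable_of_finite_setOf_order_le {f : ι → MvPowerSeries σ R}
    (hf : ∀ n : ℕ, {i | (f i).order ≤ n}.Finite) : Summable f := by
  rw [WithPiTopology.summable_iff_summable_coeff]
  intro m
  exact summable_of_hasFiniteSupport ((hf (Finsupp.degree m)).subset fun i hi => order_le hi)

theorem summable_prod_pow_of_constantCoeff_eq_zero [Fintype ι] {y : ι → MvPowerSeries σ R}
    (hy : ∀ i, constantCoeff (y i) = 0) : Summable fun c : ι → ℕ => ∏ i, y i ^ c i := by
  refine summable_of_finite_setOf_order_le fun n => ?_
  refine (Set.Finite.pi fun _ => Set.finite_Iic n).subset fun c hc i _ => ?_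
  have hsum : ((∑ i, c i : ℕ) : ℕ∞) ≤ n := calc
    ((∑ i, c i : ℕ) : ℕ∞) = ∑ i, (c i : ℕ∞) := by push_cast; rfl
    _ ≤ ∑ i, (y i ^ c i).order :=
      Finset.sum_le_sum fun i _ => le_order_pow_of_constantCoeff_eq_zero _ (hy i)
    _ ≤ (∏ i, y i ^ c i).order := le_order_prod _ _
    _ ≤ n := hc
  exact (Finset.single_le_sum (fun j _ => Nat.zero_le (c j)) (Finset.mem_univ i)).trans
    (by exact_mod_cast hsum)

end Summable

variable [Field k] [TopologicalSpace k] [IsTopologicalRing k] [T2Space k]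

theorem hasSum_pow_of_constantCoeff_eq_zero {y : MvPowerSeries σ k} (hy : constantCoeff y = 0) :
    HasSum (y ^ ·) (1 - y)⁻¹ := by
  have hsum := WithPiTopology.summable_pow_of_constantCoeff_eq_zero hy
  convert hsum.hasSum
  rw [MvPowerSeries.inv_eq_iff_mul_eq_one (by simp [hy]),
    WithPiTopology.tsum_pow_mul_one_sub_of_constantCoeff_eq_zero hy]

theorem hasSum_prod_pow_of_constantCoeff_eq_zero [Fintype ι] {y : ι → MvPowerSeries σ k}
    (hy : ∀ i, constantCoeff (y i) = 0) :
    HasSum (fun c : ι → ℕ => ∏ i, y i ^ c i) (∏ i, (1 - y i)⁻¹) := by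
  revert y
  refine Fintype.induction_empty_option (P := fun ι _ => ∀ {y : ι → MvPowerSeries σ k},
    (∀ i, constantCoeff (y i) = 0) → HasSum (fun c : ι → ℕ => ∏ i, y i ^ c i) (∏ i, (1 - y i)⁻¹))
    ?of_equiv ?empty ?option ι
  case of_equiv =>
    intro α β _ e ih y hy
    let _ : Fintype α := Fintype.ofEquiv β e.symm
    have h := ih (y := fun i => y (e i)) fun i => hy (e i)
    rw [e.prod_comp fun j => (1 - y j)⁻¹] at h
    rw [← (Equiv.arrowCongr e (Equiv.refl ℕ)).hasSum_iff]
    convert h using 2 with c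
    exact Fintype.prod_equiv e.symm _ _ fun i => by simp
  case empty =>
    intro y _
    simp
  case option =>
    intro α _ ih y hy
    let e : (Option α → ℕ) ≃ ℕ × (α → ℕ) := Equiv.piOptionEquivProd
    have hsplit : ∀ c, ∏ i, y i ^ c i = y none ^ (e c).1 * ∏ i, y (some i) ^ (e c).2 i :=
      fun c => Fintype.prod_option _
    have hsummable : Summable fun p : ℕ × (α → ℕ) => y none ^ p.1 * ∏ i, y (some i) ^ p.2 i := by
      simpa only [Function.comp_def, hsplit, Equiv.apply_symm_apply] using
        e.symm.summable_iff.mpr (summable_prod_pow_of_constantCoeff_eq_zero hy)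
    rw [Fintype.prod_option, ← e.symm.hasSum_iff]
    simp only [Function.comp_def, hsplit, Equiv.apply_symm_apply]
    have hprod := (hasSum_pow_of_constantCoeff_eq_zero (hy none)).mul
      (ih fun i => hy (some i)) hsummable
    exact hprod

end MvPowerSeries

namespace HDP

variable {d : ℕ}

theorem DownClosed.isLowerSet {ρ : Set (Fin d → ℕ)} (h : DownClosed ρ) : IsLowerSet ρ :=
  fun _ _ hij hj => h _ _ hij hj

theorem IsPartition.antitone {π : (Fin d → ℕ) → ℕ} (h : IsPartition π) : Antitone π :=
  fun _ _ hij => h.2 _ _ hij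

theorem covBy_iff_exists_step {i j : Fin d → ℕ} : i ⋖ j ↔ ∃ ℓ, j = step i ℓ := by
  simp only [Pi.covBy_iff_exists_right_eq, Nat.covBy_iff_add_one_eq, step]
  constructor
  · rintro ⟨ℓ, _, rfl, rfl⟩
    exact ⟨ℓ, rfl⟩
  · rintro ⟨ℓ, rfl⟩
    exact ⟨ℓ, _, rfl, rfl⟩

theorem lt_step (i : Fin d → ℕ) (ℓ : Fin d) : i < step i ℓ :=
  (covBy_iff_exists_step.mpr ⟨ℓ, rfl⟩).lt

theorem sum_step (i : Fin d → ℕ) (ℓ : Fin d) : ∑ j, step i ℓ j = ∑ j, i j + 1 := by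
  rw [step, Finset.sum_update_of_mem (Finset.mem_univ ℓ),
    ← Finset.add_sum_erase _ i (Finset.mem_univ ℓ), Finset.sdiff_singleton_eq_erase]
  omega

theorem antitone_of_step_le {α : Type*} [Preorder α] {f : (Fin d → ℕ) → α}
    (h : ∀ i ℓ, f (step i ℓ) ≤ f i) : Antitone f := by
  refine (antitone_iff_forall_covBy f).mpr fun i j hij => ?_
  obtain ⟨ℓ, rfl⟩ := covBy_iff_exists_step.mp hij
  exact h i ℓ

theorem eq_of_step_induction {M : Type*} [Zero M] {f g : (Fin d → ℕ) → M}
    (hf : (Function.support f).Finite) (hg : (Function.support g).Finite)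
    (h : ∀ i, (∀ ℓ, f (step i ℓ) = g (step i ℓ)) → f i = g i) : f = g := by
  by_contra hne
  have hfin : {i | f i ≠ g i}.Finite :=
    (hf.union hg).subset fun i hi => by_contra fun h' => hi (by simp_all)
  obtain ⟨i, hi⟩ := hfin.exists_maximal (Function.ne_iff.mp hne)
  exact hi.1 (h i fun ℓ => by_contra fun h' => (hi.2 h' (lt_step i ℓ).le).not_gt (lt_step i ℓ))

def stepMax (π : (Fin d → ℕ) → ℕ) (i : Fin d → ℕ) : ℕ :=
  Finset.univ.sup fun ℓ => π (step i ℓ)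

def cornerCount (π : (Fin d → ℕ) → ℕ) (i : Fin d → ℕ) : ℕ := π i - stepMax π i

theorem stepMax_le {π : (Fin d → ℕ) → ℕ} (hπ : Antitone π) (i : Fin d → ℕ) :
    stepMax π i ≤ π i :=
  Finset.sup_le fun ℓ _ => hπ (lt_step i ℓ).le

theorem support_cornerCount_subset (π : (Fin d → ℕ) → ℕ) :
    Function.support (cornerCount π) ⊆ Function.support π := fun i hi => by
  simp only [Function.mem_support, cornerCount] at hi ⊢
  omega

theorem mem_Cor_iff {π : (Fin d → ℕ) → ℕ} {p : (Fin d → ℕ) × ℕ} :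
    p ∈ Cor π ↔ stepMax π p.1 < p.2 ∧ p.2 ≤ π p.1 := by
  constructor
  · rintro ⟨h1, hle, hlt⟩
    exact ⟨(Finset.sup_lt_iff h1).mpr fun ℓ _ => hlt ℓ, hle⟩
  · rintro ⟨hlt, hle⟩
    have h1 : 1 ≤ p.2 := (Nat.zero_le _).trans_lt hlt
    exact ⟨h1, hle, fun ℓ => (Finset.sup_lt_iff h1).mp hlt ℓ (Finset.mem_univ ℓ)⟩

theorem finprod_mem_Cor {M : Type*} [CommMonoid M] {π : (Fin d → ℕ) → ℕ}
    {s : Finset (Fin d → ℕ)} (hπ : Function.support π ⊆ ↑s) (f : (Fin d → ℕ) → M) :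
    ∏ᶠ p ∈ Cor π, f p.1 = ∏ i ∈ s, f i ^ cornerCount π i := by
  have hCor : Cor π = ↑((s.sigma fun i => Finset.Ioc (stepMax π i) (π i)).map
      (Equiv.sigmaEquivProd _ _).toEmbedding) := by
    ext ⟨i, k⟩
    simp only [mem_Cor_iff, Finset.coe_map, Set.mem_image, Finset.mem_coe, Finset.mem_sigma,
      Finset.mem_Ioc]
    constructor
    · rintro ⟨hlt, hle⟩
      have hi : π i ≠ 0 := by omega
      exact ⟨⟨i, k⟩, ⟨hπ hi, hlt, hle⟩, rfl⟩
    · rintro ⟨⟨i, k⟩, ⟨-, h⟩, ⟨⟩⟩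
      exact h
  rw [hCor, finprod_mem_coe_finset, Finset.prod_map, Finset.prod_sigma]
  refine Finset.prod_congr rfl fun i _ => ?_
  simp [cornerCount]

section Paths

variable {i : Fin d → ℕ} {n : ℕ} {p : ℕ → Fin d → ℕ}

theorem IsPathFrom.le_apply (hp : IsPathFrom i n p) {t : ℕ} (ht : t ≤ n) : i ≤ p t := by
  induction t with
  | zero => exact hp.1.ge
  | succ t ih =>
    obtain ⟨ℓ, hℓ⟩ := hp.2 t ht
    exact (ih (by omega)).trans (hℓ ▸ (lt_step _ ℓ).le)

theorem IsPathFrom.sum_apply (hp : IsPathFrom i n p) {t : ℕ} (ht : t ≤ n) :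
    ∑ j, p t j = ∑ j, i j + t := by
  induction t with
  | zero => simp [hp.1]
  | succ t ih =>
    obtain ⟨ℓ, hℓ⟩ := hp.2 t ht
    rw [hℓ, sum_step, ih (by omega), add_assoc]

theorem IsPathFrom.injOn (hp : IsPathFrom i n p) : Set.InjOn p (Finset.range (n + 1)) :=
  fun a ha b hb hab => by
    simp only [Finset.coe_range, Set.mem_Iio] at ha hb
    have := hp.sum_apply (t := a) (by omega)
    rw [hab, hp.sum_apply (by omega)] at this
    omega

theorem IsPathFrom.cons {ℓ : Fin d} {q : ℕ → Fin d → ℕ} (hq : IsPathFrom (step i ℓ) n q) :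
    IsPathFrom i (n + 1) (fun t => Nat.casesOn t i q) := by
  refine ⟨rfl, fun t ht => ?_⟩
  cases t with
  | zero => exact ⟨ℓ, hq.1⟩
  | succ t => exact hq.2 t (by omega)

theorem IsPathFrom.tail (hp : IsPathFrom i (n + 1) p) :
    ∃ ℓ, IsPathFrom (step i ℓ) n (fun t => p (t + 1)) := by
  obtain ⟨ℓ, hℓ⟩ := hp.2 0 (by omega)
  exact ⟨ℓ, by rw [← hp.1]; exact hℓ, fun t ht => hp.2 (t + 1) (by omega)⟩

end Paths

def pathWeights (A : (Fin d → ℕ) → ℕ) (i : Fin d → ℕ) : Set ℕ :=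
  {s | ∃ n p, IsPathFrom i n p ∧ s = ∑ t ∈ Finset.range (n + 1), A (p t)}

section LastPassage

variable {A : (Fin d → ℕ) → ℕ} {i : Fin d → ℕ}

theorem apply_mem_pathWeights : A i ∈ pathWeights A i :=
  ⟨0, fun _ => i, ⟨rfl, fun _ ht => absurd ht (Nat.not_lt_zero _)⟩, by simp⟩

theorem le_sum_of_mem_pathWeights (hA : (Function.support A).Finite) {s : ℕ}
    (hs : s ∈ pathWeights A i) : s ≤ ∑ j ∈ hA.toFinset, A j := by
  classical
  obtain ⟨n, p, hp, rfl⟩ := hs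
  rw [← Finset.sum_image hp.injOn]
  exact Finset.sum_le_sum_of_ne_zero fun j _ hj => hA.mem_toFinset.mpr hj

theorem le_lpt (hA : (Function.support A).Finite) {s : ℕ} (hs : s ∈ pathWeights A i) :
    s ≤ lpt A i :=
  le_csSup ⟨_, fun _ => le_sum_of_mem_pathWeights hA⟩ hs

theorem lpt_mem_pathWeights (hA : (Function.support A).Finite) : lpt A i ∈ pathWeights A i :=
  Nat.sSup_mem ⟨_, apply_mem_pathWeights⟩ ⟨_, fun _ => le_sum_of_mem_pathWeights hA⟩

theorem lpt_le {b : ℕ} (h : ∀ s ∈ pathWeights A i, s ≤ b) : lpt A i ≤ b :=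
  csSup_le ⟨_, apply_mem_pathWeights⟩ h

theorem add_lpt_step_le (hA : (Function.support A).Finite) (ℓ : Fin d) :
    A i + lpt A (step i ℓ) ≤ lpt A i := by
  obtain ⟨n, q, hq, hsum⟩ := lpt_mem_pathWeights hA (i := step i ℓ)
  refine le_lpt hA ⟨n + 1, _, hq.cons, ?_⟩
  rw [Finset.sum_range_succ', hsum, add_comm]
  rfl

theorem lpt_eq_add_stepMax (hA : (Function.support A).Finite) (i : Fin d → ℕ) :
    lpt A i = A i + stepMax (lpt A) i := by
  refine le_antisymm (lpt_le ?_) ?_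
  · rintro _ ⟨n, p, hp, rfl⟩
    cases n with
    | zero => simp [hp.1]
    | succ n =>
      obtain ⟨ℓ, hq⟩ := hp.tail
      rw [Finset.sum_range_succ', hp.1, add_comm]
      gcongr
      exact (le_lpt hA ⟨n, _, hq, rfl⟩).trans (Finset.le_sup (f := fun ℓ => lpt A (step i ℓ))
        (Finset.mem_univ ℓ))
  · have hA_le : A i ≤ lpt A i := le_lpt hA apply_mem_pathWeights
    have : stepMax (lpt A) i ≤ lpt A i - A i :=
      Finset.sup_le fun ℓ _ => by have := add_lpt_step_le hA (i := i) ℓ; omega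
    omega

theorem antitone_lpt (hA : (Function.support A).Finite) : Antitone (lpt A) :=
  antitone_of_step_le fun _ ℓ => (Nat.le_add_left _ _).trans (add_lpt_step_le hA ℓ)

theorem cornerCount_lpt (hA : (Function.support A).Finite) : cornerCount (lpt A) = A := by
  funext i
  have := lpt_eq_add_stepMax hA i
  rw [cornerCount]
  omega

theorem lpt_eq_zero (h : ∀ j, i ≤ j → A j = 0) : lpt A i = 0 :=
  Nat.le_zero.mp <| lpt_le fun _ ⟨n, p, hp, hs⟩ => by
    rw [hs, Finset.sum_eq_zero fun t ht => h _ (hp.le_apply (Finset.mem_range_succ_iff.mp ht))]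

theorem support_lpt_subset {ρ : Set (Fin d → ℕ)} (hρ : IsLowerSet ρ)
    (hA : Function.support A ⊆ ρ) : Function.support (lpt A) ⊆ ρ := fun i hi => by
  by_contra hiρ
  exact hi (lpt_eq_zero fun j hij => by_contra fun hj => hiρ (hρ hij (hA hj)))

end LastPassage

theorem lpt_cornerCount {π : (Fin d → ℕ) → ℕ} (hπ : IsPartition π) :
    lpt (cornerCount π) = π := by
  have hcc : (Function.support (cornerCount π)).Finite :=
    hπ.1.subset (support_cornerCount_subset π)
  have hlower : IsLowerSet (Function.support π) := fun i j hji hi => by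
    simp only [Function.mem_support] at hi ⊢
    have := hπ.antitone hji
    omega
  have hfin : (Function.support (lpt (cornerCount π))).Finite :=
    hπ.1.subset (support_lpt_subset hlower (support_cornerCount_subset π))
  refine eq_of_step_induction hfin hπ.1 fun i hstep => ?_
  have hstepMax : stepMax (lpt (cornerCount π)) i = stepMax π i :=
    Finset.sup_congr rfl fun ℓ _ => hstep ℓ
  have := stepMax_le hπ.antitone i
  rw [lpt_eq_add_stepMax hcc, hstepMax, cornerCount]
  omega

def partitionEquiv {ρ : Set (Fin d → ℕ)} (hfin : ρ.Finite) (hρ : IsLowerSet ρ) :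
    {c : (Fin d → ℕ) → ℕ // Function.support c ⊆ ρ} ≃
      {π : (Fin d → ℕ) → ℕ // IsPartition π ∧ Function.support π ⊆ ρ} where
  toFun c := ⟨lpt c, ⟨hfin.subset (support_lpt_subset hρ c.2),
    fun _ _ hij => antitone_lpt (hfin.subset c.2) hij⟩, support_lpt_subset hρ c.2⟩
  invFun π := ⟨cornerCount π, (support_cornerCount_subset π.1).trans π.2.2⟩
  left_inv c := Subtype.ext (cornerCount_lpt (hfin.subset c.2))
  right_inv π := Subtype.ext (lpt_cornerCount π.2.1)

def supportSubsetEquiv {ι M : Type*} [DecidableEq ι] [Zero M] (s : Finset ι) :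
    {c : ι → M // Function.support c ⊆ ↑s} ≃ (s → M) where
  toFun c i := c.1 i
  invFun g := ⟨fun i => if h : i ∈ s then g ⟨i, h⟩ else 0, fun i hi => by
    by_contra h
    exact hi (dif_neg h)⟩
  left_inv c := Subtype.ext <| funext fun i => by
    by_cases h : i ∈ s
    · simp [h]
    · simp [h, Function.notMem_support.mp fun hc => h (c.2 hc)]
  right_inv g := funext fun i => dif_pos i.2

end HDP

open MvPowerSeries in
/-- Multivariate corner generating function over `d`-dimensional partitions with
shape contained in a fixed shape `ρ`.  The variable `x^{(j)}_m` is `X (j, m)`. -/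
theorem corner_generating_function_subshape {d : ℕ} (ρ : Set (Fin d → ℕ))
    (hfin : ρ.Finite) (hdown : DownClosed ρ) :
    ∑' π : {π : (Fin d → ℕ) → ℕ // IsPartition π ∧ Function.support π ⊆ ρ},
        ∏ᶠ p ∈ Cor π.1, ∏ j : Fin d, (X (j, p.1 j) : MvPowerSeries (Fin d × ℕ) ℚ)
      = ∏ i ∈ hfin.toFinset, (1 - ∏ j : Fin d, (X (j, i j) : MvPowerSeries (Fin d × ℕ) ℚ))⁻¹ := by
  obtain ⟨s, rfl⟩ := hfin.exists_finset_coe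
  set x : (Fin d → ℕ) → MvPowerSeries (Fin d × ℕ) ℚ := fun i => ∏ j : Fin d, X (j, i j)
  let e := (supportSubsetEquiv s).symm.trans (partitionEquiv hfin hdown.isLowerSet)
  have hterm : ∀ c : s → ℕ, ∏ᶠ p ∈ Cor (e c).1, x p.1 = ∏ i : s, x i ^ c i := fun c => by
    have hcorner : cornerCount (e c).1 = ((supportSubsetEquiv s).symm c).1 :=
      cornerCount_lpt (s.finite_toSet.subset ((supportSubsetEquiv s).symm c).2)
    rw [finprod_mem_Cor (e c).2.2, hcorner, ← Finset.prod_coe_sort]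
    exact Finset.prod_congr rfl fun i _ => congrArg (x i ^ ·) (dif_pos i.2)
  rw [Finset.finite_toSet_toFinset, ← e.tsum_eq, tsum_congr hterm, ← Finset.prod_coe_sort s]
  rcases Nat.eq_zero_or_pos d with rfl | hd
  · -- every `x i` is `1`: both sides are `0 ^ #s`, as a non-summable `tsum` is `0` and `0⁻¹ = 0`
    simp [x, Nat.card_fun]
  · open scoped MvPowerSeries.WithPiTopology in
    exact (hasSum_prod_pow_of_constantCoeff_eq_zero fun i => by simp [x, hd.ne']).tsum_eq
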